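/- For l = 2 the limit character is given by the bosonic formula χ^{(∞)}_{k,2;b_0}(q,z) = Σ_{n≥0} (−1)^{n+1} q^{n²k + n b_0 + 3n(n+1)/2} z^{nk + b_0 + n + 1} / ( (q)_n (q^n z)_∞ ) + Σ_{n≥0} (−1)^n q^{n²k − n b_0 + n(3n−1)/2} z^{nk + n} / ( (q)_n (q^n z)_∞ ), as an identity of formal power series in q and z. -/

import Mathlib

open Finset Filter MvPowerSeries

noncomputable section

/-- Formal power series in two variables `q` (index 0) and `z` (index 1). -/
abbrev PS : Type := MvPowerSeries (Fin 2) ℂ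

/-- The variable `q`. -/
def Qv : PS := MvPowerSeries.X 0
/-- The variable `z`. -/
def Zv : PS := MvPowerSeries.X 1

/-- Build a power series from its coefficient function. -/
def ofCoeff (c : (Fin 2 →₀ ℕ) → ℂ) : PS := c

/-- The exponent `q^a z^c`. -/
def idx2 (a c : ℕ) : Fin 2 →₀ ℕ := Finsupp.single 0 a + Finsupp.single 1 c

/-- The q-shift operator `(S g)(q,z) = g(q,qz)`. -/
def Sop (f : PS) : PS :=
  ofCoeff fun e => if e 1 ≤ e 0 then MvPowerSeries.coeff (idx2 (e 0 - e 1) (e 1)) f else 0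

/-- The window condition for `(k,l)`-configurations: `x_j + ... + x_{j+l-1} ≤ k`. -/
def windowOK (k l : ℕ) (x : ℕ → ℕ) : Prop := ∀ j, ∑ t ∈ Finset.range l, x (j + t) ≤ k

/-- The boundary condition: `x_0 + ... + x_i ≤ b_i` for `0 ≤ i ≤ l-2`. -/
def boundOK (l : ℕ) (b : ℕ → ℕ) (x : ℕ → ℕ) : Prop :=
  ∀ i, i < l - 1 → ∑ t ∈ Finset.range (i + 1), x t ≤ b i

/-- Admissible boundary vectors: `b_0 ≤ b_1 ≤ ... ≤ b_{l-2} ≤ k`. -/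
def AdmB (k l : ℕ) (b : ℕ → ℕ) : Prop :=
  (∀ i j, i ≤ j → j < l - 1 → b i ≤ b j) ∧ ∀ i, i < l - 1 → b i ≤ k

/-- The character `χ^{(N)}_{k,l;b}(q,z)`: the coefficient of `q^a z^m` counts
`(k,l)`-configurations of length at most `N` obeying the boundary conditions,
with `Σ j·x_j = a` and `Σ x_j = m`. -/
def chiN (k l N : ℕ) (b : ℕ → ℕ) : PS :=
  ofCoeff fun e => (Nat.card {x : ℕ → ℕ //
    windowOK k l x ∧ boundOK l b x ∧ (∀ i, N ≤ i → x i = 0) ∧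
    ∑ j ∈ Finset.range N, j * x j = e 0 ∧ ∑ j ∈ Finset.range N, x j = e 1} : ℂ)

/-- The limit character `χ^{(∞)}_{k,l;b}(q,z)`. -/
def chiInf (k l : ℕ) (b : ℕ → ℕ) : PS :=
  ofCoeff fun e => (Nat.card {x : ℕ → ℕ //
    windowOK k l x ∧ boundOK l b x ∧ (∀ i, e 0 + 1 ≤ i → x i = 0) ∧
    ∑ j ∈ Finset.range (e 0 + 1), j * x j = e 0 ∧
    ∑ j ∈ Finset.range (e 0 + 1), x j = e 1} : ℂ)

/-- The shifted boundary vector `(b_1 - i, ..., b_{l-2} - i, k - i)`. -/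
def shiftB (k l : ℕ) (b : ℕ → ℕ) (i : ℕ) : ℕ → ℕ :=
  fun j => if j + 1 ≤ l - 2 then b (j + 1) - i else k - i

/-- The monomial `q^{p.1} z^{p.2}`. -/
def monoPS (p : ℕ × ℕ) : PS := Qv ^ p.1 * Zv ^ p.2

/-- Exponents in the bracket `[P_1,...,P_l] = P_1^{b_0} P_2^{b_1-b_0} ⋯ P_l^{k-b_{l-2}}`. -/
def bexp (l k : ℕ) (b : ℕ → ℕ) (i : ℕ) : ℕ :=
  if i = 0 then b 0 else if i = l - 1 then k - b (l - 2) else b i - b (i - 1)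

/-- The bracket `[P_1,...,P_l]` as a function of the boundary vector `b`. -/
def bracket (l k : ℕ) (P : ℕ → ℕ × ℕ) (b : ℕ → ℕ) : PS :=
  ∏ i ∈ Finset.range l, monoPS (P i) ^ bexp l k b i

/-- q-exponent pattern of the tuples in the list defining `V_l`
(`r` of the entries carry a factor `z`; `c 0 = 0`). -/
def patQ (l r : ℕ) (c : ℕ → ℕ) (j : ℕ) : ℕ := if j < r then c (l - r + j) else c (j - r)

/-- z-exponent pattern of the tuples in the list defining `V_l`. -/
def patZ (r j : ℕ) : ℕ := if j < r then 1 else 0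

/-- The tuples `(P_1,...,P_l)` appearing in the definition of `V_l`, namely
`q^{mk} z^{nk}[q^{c_{l-r}}z, …, q^{c_{l-1}}z, 1, q^{c_1}, …, q^{c_{l-1-r}}]`
with the common factor `q^m z^n` distributed over the entries. -/
def SimpleTuple (l : ℕ) (P : ℕ → ℕ × ℕ) : Prop :=
  ∃ m n r : ℕ, r < l ∧ ∃ c : ℕ → ℕ, c 0 = 0 ∧ Monotone c ∧
    ∀ j, j < l → P j = (m + patQ l r c j, n + patZ r j)

/-- Admissible boundary data. -/
def Adm (k l : ℕ) : Type := {b : ℕ → ℕ // AdmB k l b}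

/-- The ambient space of functions of `b` with values in power series; `V_l` is a
subspace of it. -/
abbrev VV (k l : ℕ) : Type := Adm k l → PS

/-- The simple vector `f(q,z)·[P_1,...,P_l]`. -/
def simpleVal (k l : ℕ) (f : PS) (P : ℕ → ℕ × ℕ) : VV k l := fun b => f * bracket l k P b.val

/-- The space `V_l`, spanned by simple vectors. -/
def Vspan (k l : ℕ) : Submodule ℂ (VV k l) :=
  Submodule.span ℂ {v | ∃ f P, SimpleTuple l P ∧ v = simpleVal k l f P}

/-- Power series expansion of `1/(1 - q^{w.1} z^{w.2})` where `w` may have negative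
exponents, in which case `1/(1-u) = -Σ_{n≥1} u^{-n}` is used. -/
def geomPS : ℤ × ℤ → PS := fun w =>
  if 0 ≤ w.1 ∧ 0 ≤ w.2 then
    ofCoeff fun e => ({n : ℕ | (n : ℤ) * w.1 = (e 0 : ℤ) ∧ (n : ℤ) * w.2 = (e 1 : ℤ)}.ncard : ℂ)
  else
    ofCoeff fun e =>
      -({n : ℕ | 0 < n ∧ (n : ℤ) * w.1 = -(e 0 : ℤ) ∧ (n : ℤ) * w.2 = -(e 1 : ℤ)}.ncard : ℂ)

/-- Exponents of `S(q^{-1} z P_l / P_1)`. -/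
def wExpA (l : ℕ) (P : ℕ → ℕ × ℕ) : ℤ × ℤ :=
  (((P (l-1)).1 : ℤ) + ((P (l-1)).2 : ℤ) - ((P 0).1 : ℤ) - ((P 0).2 : ℤ),
   ((P (l-1)).2 : ℤ) + 1 - ((P 0).2 : ℤ))

/-- The q-shift of a monomial: `S(q^e z^d) = q^{e+d} z^d`. -/
def Smono (p : ℕ × ℕ) : ℕ × ℕ := (p.1 + p.2, p.2)

/-- The tuple `(S P_1, S P_1, S P_2, ..., S P_{l-1})` produced by the operator `A`. -/
def tupA (P : ℕ → ℕ × ℕ) : ℕ → ℕ × ℕ := fun j => if j = 0 then Smono (P 0) else Smono (P (j - 1))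

/-- The tuple `(S(q^{-1} z P_l), S P_1, ..., S P_{l-1})` produced by the operator `B`. -/
def tupB (l : ℕ) (P : ℕ → ℕ × ℕ) : ℕ → ℕ × ℕ :=
  fun j => if j = 0 then ((P (l-1)).1 + (P (l-1)).2, (P (l-1)).2 + 1) else Smono (P (j - 1))

/-- Defining property of the operator `A`:
`A(f[P_1,…,P_l]) = S(f/(1 - q^{-1}zP_l/P_1)·[P_1,P_1,P_2,…,P_{l-1}])`. -/
def HypA (k l : ℕ) (A : Module.End ℂ (VV k l)) : Prop :=
  ∀ f P, SimpleTuple l P →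
    A (simpleVal k l f P) = simpleVal k l (Sop f * geomPS (wExpA l P)) (tupA P)

/-- Defining property of the operator `B`:
`B(f[P_1,…,P_l]) = S(f/(1 - q z^{-1}P_1/P_l)·[q^{-1}zP_l,P_1,…,P_{l-1}])`. -/
def HypB (k l : ℕ) (B : Module.End ℂ (VV k l)) : Prop :=
  ∀ f P, SimpleTuple l P →
    B (simpleVal k l f P) =
      simpleVal k l (Sop f * geomPS (-(wExpA l P).1, -(wExpA l P).2)) (tupB l P)

/-- The vector `v_ini = [1,...,1]`. -/
def vini (k l : ℕ) : VV k l := simpleVal k l 1 (fun _ => (0, 0))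

/-- `(z)_n = Π_{i=0}^{n-1} (1 - q^i z)`. -/
def pochZ (n : ℕ) : PS := ∏ i ∈ Finset.range n, (1 - Qv ^ i * Zv)
/-- `(q)_t = Π_{i=1}^{t} (1 - q^i)`. -/
def pochQ (t : ℕ) : PS := ∏ i ∈ Finset.range t, (1 - Qv ^ (i + 1))
/-- `(q^t z)_∞ = Π_{i≥0} (1 - q^{t+i} z)`, defined coefficientwise. -/
def pochInfQZ (t : ℕ) : PS :=
  ofCoeff fun e =>
    MvPowerSeries.coeff e (∏ i ∈ Finset.range (e 0 + 1), (1 - Qv ^ (t + i) * Zv))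
/-- `(z)_∞ = Π_{i≥0} (1 - q^i z)`. -/
def pochInfZ : PS := pochInfQZ 0

/-- The vector `v_∞ = [1,...,1]/(z)_∞`. -/
def vinf (k l : ℕ) : VV k l := simpleVal k l pochInfZ⁻¹ (fun _ => (0, 0))

/-- Application of a monomial (word) in the operators `A` (letter `true`) and
`B` (letter `false`) to a vector; the leftmost letter acts last read, i.e.
`C_1 C_2 ⋯ C_m v = C_1 (C_2 (⋯ (C_m v)))`. -/
def wact (k l : ℕ) (A B : Module.End ℂ (VV k l)) (w : List Bool) (v : VV k l) : VV k l :=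
  w.foldr (fun c u => if c then A u else B u) v

/-- A good monomial: `C_i = A` implies `C_{i+l-1} = A` (letters 0-indexed, `true = A`). -/
def GoodWord (l : ℕ) (w : List Bool) : Prop :=
  ∀ i, i + (l - 1) < w.length → w.getD i true = true → w.getD (i + (l - 1)) true = true

/-- Canonical representative of an equivalence class of monomials: no trailing `A`s. -/
def Reduced (w : List Bool) : Prop := w = [] ∨ w.getLast? = some false

/-- Symbols for marked vertices: `•`, `∘`, `×`. -/
inductive MSym : Type
  | dot | circ | mark
  deriving DecidableEq

/-- The `A`-arrow on (possibly marked) vertices. -/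
def stepA : List MSym → List MSym
  | MSym.circ :: J => J ++ [MSym.circ]
  | MSym.dot :: _ :: J => MSym.dot :: (J ++ [MSym.circ])
  | MSym.mark :: MSym.dot :: J => MSym.dot :: (J ++ [MSym.circ])
  | MSym.mark :: MSym.circ :: J => MSym.mark :: (J ++ [MSym.circ])
  | MSym.mark :: MSym.mark :: J => MSym.dot :: (J ++ [MSym.circ])
  | v => v

/-- The `B`-arrow on (possibly marked) vertices: rotation. -/
def stepB : List MSym → List MSym
  | [] => []
  | x :: J => J ++ [x]

/-- The marked path of the monomial `w` (extended by `A`s at positions beyond its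
length), starting from `[•,…,•,×]`; `mstate l w t` is the vertex after `t` arrows. -/
def mstate (l : ℕ) (w : List Bool) : ℕ → List MSym
  | 0 => List.replicate (l - 1) MSym.dot ++ [MSym.mark]
  | t + 1 => (if w.getD t true then stepA else stepB) (mstate l w t)

/-- The `t`-th vertex of the marked path has the form `[× • J]`, i.e. the `t`-th
arrow is of type (i) or (ii). -/
def CSrc (l : ℕ) (w : List Bool) (t : ℕ) : Prop :=
  (mstate l w t).getD 0 MSym.circ = MSym.mark ∧ (mstate l w t).getD 1 MSym.circ = MSym.dot

/-- `(N A K, N B K)` is a cancellation pair: `N A K` is good and the displayed `A`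
is its cancellation `A`-arrow (the last arrow of type (i) or (ii)). -/
def CancelPair (l : ℕ) (N K : List Bool) : Prop :=
  GoodWord l (N ++ true :: K) ∧ CSrc l (N ++ true :: K) N.length ∧
    ∀ t, N.length < t → ¬ CSrc l (N ++ true :: K) t

/-- `w` is good and has a cancellation `A`-arrow. -/
def HasCA (l : ℕ) (w : List Bool) : Prop :=
  GoodWord l w ∧ ∃ t, w.getD t true = true ∧ CSrc l w t ∧ ∀ t', t < t' → ¬ CSrc l w t'

/-- `w` is good and has a cancellation `B`-arrow. -/
def HasCB (l : ℕ) (w : List Bool) : Prop :=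
  GoodWord l w ∧ ∃ t, w.getD t true = false ∧ CSrc l w t ∧ ∀ t', t < t' → ¬ CSrc l w t'

/-- The index of the cancellation arrow. -/
def cancelIdx (l : ℕ) (w : List Bool) : ℕ :=
  sInf {t | CSrc l w t ∧ ∀ t', t < t' → ¬ CSrc l w t'}

/-- Flip the letter at the cancellation arrow. -/
def flipCancel (l : ℕ) (w : List Bool) : List Bool :=
  (w ++ List.replicate (cancelIdx l w + 1 - w.length) true).set (cancelIdx l w) false

/-- The lattice `Λ` is `ℕ → ℤ` supported on `{0,…,l-1}`; coordinates `0,…,l-2`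
are the generators `b_0,…,b_{l-2}` and coordinate `l-1` is the generator `k`.
`Ma` is the map `M_a`: `b_i ↦ b_{i+1}` (`i ≤ l-3`), `b_{l-2} ↦ k`, `k ↦ k`. -/
def Ma (l : ℕ) (v : ℕ → ℤ) : ℕ → ℤ := fun j =>
  if j = 0 then 0
  else if j = l - 1 then v (l - 2) + v (l - 1)
  else if j < l - 1 then v (j - 1)
  else 0

/-- The map `M_b`: `b_i ↦ b_{i+1} - b_0` (`i ≤ l-3`), `b_{l-2} ↦ k - b_0`, `k ↦ k`. -/
def Mb (l : ℕ) (v : ℕ → ℤ) : ℕ → ℤ := fun j =>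
  if j = 0 then -(∑ i ∈ Finset.range (l - 1), v i)
  else if j = l - 1 then v (l - 2) + v (l - 1)
  else if j < l - 1 then v (j - 1)
  else 0

/-- The representative `ī ∈ {1,…,l}` of `i` modulo `l`. -/
def ibar (l : ℕ) (i : ℤ) : ℕ := ((i - 1) % (l : ℤ)).toNat + 1

/-- `ι_{i,j} = b_{ī-2} - b_{j̄-2} + k·δ(ī ≤ j̄)` (with `b_{-1} = 0`). -/
def iotaL (l : ℕ) (i j : ℤ) : ℕ → ℤ := fun t =>
  (if 2 ≤ ibar l i ∧ t = ibar l i - 2 then 1 else 0)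
  - (if 2 ≤ ibar l j ∧ t = ibar l j - 2 then 1 else 0)
  + (if ibar l i ≤ ibar l j ∧ t = l - 1 then 1 else 0)

/-- `M_{c_1} ∘ ⋯ ∘ M_{c_m}` applied to `v`, where `c_i = a` if the `i`-th letter is
`A` (`true`) and `c_i = b` otherwise. -/
def applyWord (l : ℕ) (w : List Bool) (v : ℕ → ℤ) : ℕ → ℤ :=
  w.foldr (fun c u => if c then Ma l u else Mb l u) v

/-- The extremal configuration of the monomial `w`:
`x_i = 0` if `C_{i+1} = A` and `x_i = M_{c_1} ∘ ⋯ ∘ M_{c_i}(b_0)` if `C_{i+1} = B`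
(entries beyond the length of `w` are `0`, matching equivalence of configurations). -/
def xconf (l : ℕ) (w : List Bool) (i : ℕ) : ℕ → ℤ :=
  if w.getD i true = true then 0 else applyWord l (w.take i) (iotaL l 2 1)

/-- The `A`-arrow of the summation graph (vertices as arrays of `•` = `true`,
`∘` = `false`). -/
def vstepA : List Bool → List Bool
  | false :: J => J ++ [false]
  | true :: _ :: J => true :: (J ++ [false])
  | v => v

/-- The `B`-arrow of the summation graph: rotation. -/
def vstepB : List Bool → List Bool
  | [] => []
  | x :: J => J ++ [x]

/-- The path associated with `w` in the summation graph, starting from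
`I_top = [•,…,•]`; `vstate l w t` is the vertex `I^{(t)}`. -/
def vstate (l : ℕ) (w : List Bool) (t : ℕ) : List Bool :=
  (w.take t).foldl (fun v c => if c then vstepA v else vstepB v) (List.replicate l true)

/-- The evolution of the vector part of a simple vector under one operator. -/
def tupStep (l : ℕ) (c : Bool) (P : ℕ → ℕ × ℕ) : ℕ → ℕ × ℕ :=
  if c then tupA P else tupB l P

/-- The vector part of `M v_∞` for a word `M`. -/
def wordTuple (l : ℕ) : List Bool → ℕ → ℕ × ℕ
  | [] => fun _ => (0, 0)
  | c :: w => tupStep l c (wordTuple l w)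

/-- The scalar part of `M v_∞` for a word `M`. -/
def wordScalar (l : ℕ) : List Bool → PS
  | [] => pochInfZ⁻¹
  | c :: w =>
      Sop (wordScalar l w) *
        (if c then geomPS (wExpA l (wordTuple l w))
         else geomPS (-(wExpA l (wordTuple l w)).1, -(wExpA l (wordTuple l w)).2))

/-- A cancellation block `𝔹_s = C_1 ⋯ C_{l+s}` with `C_1 = C_{s+2} = C_l = B`,
`C_2 = ⋯ = C_{s+1} = A`, `C_{l+1} = ⋯ = C_{l+s} = A` (0-indexed positions). -/
def IsBlock (l s : ℕ) (w : List Bool) : Prop :=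
  s ≤ l - 2 ∧ w.length = l + s ∧
  w.getD 0 true = false ∧ w.getD (s + 1) true = false ∧ w.getD (l - 1) true = false ∧
  (∀ i, 1 ≤ i → i ≤ s → w.getD i true = true) ∧
  (∀ i, l ≤ i → i < l + s → w.getD i true = true)

/-- The block `𝔼_i = C_2 ⋯ C_l` where `C_j = B` iff `j ∈ {σ(1),…,σ(i)}`
(1-based values of the permutation; `true = A`, `false = B`). -/
def Eblock (l : ℕ) (σ : Equiv.Perm (Fin l)) (i : ℕ) : List Bool :=
  (List.range (l - 1)).map fun t => decide (∀ a : Fin l, (a : ℕ) < i → (σ a : ℕ) ≠ t + 1)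

/-- The word `𝔼_{l-2}^{n_{l-2}} ⋯ 𝔼_1^{n_1}`. -/
def coreWord (l : ℕ) (σ : Equiv.Perm (Fin l)) (n : ℕ → ℤ) : List Bool :=
  (((List.range (l - 2)).reverse.map fun i' =>
    (List.replicate (n (i' + 1)).toNat (Eblock l σ (i' + 1))).flatten)).flatten

/-- The word `B^{n_{l-1}} 𝔼_{l-2}^{n_{l-2}} ⋯ 𝔼_1^{n_1}`; for `n_{l-1} < 0` the
first `-n_{l-1}` letters (which are `B`s) are removed instead. -/
def theWord (l : ℕ) (σ : Equiv.Perm (Fin l)) (n : ℕ → ℤ) : List Bool :=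
  if 0 ≤ n (l - 1) then List.replicate (n (l - 1)).toNat false ++ coreWord l σ n
  else (coreWord l σ n).drop (-(n (l - 1))).toNat

/-- `σ(1) = l` and `σ(l) = 1` (in 1-based notation). -/
def SigmaCond (l : ℕ) (σ : Equiv.Perm (Fin l)) : Prop :=
  (∀ a : Fin l, (a : ℕ) = 0 → (σ a : ℕ) = l - 1) ∧
  (∀ a : Fin l, (a : ℕ) = l - 1 → (σ a : ℕ) = 0)

/-- The conditions on `n = (n_1,…,n_{l-1})`: `n_i ≥ 0` for `i ≤ l-2`,
`n_{l-1} ≥ 2 - σ(l-1)`, `n_i > 0` whenever `σ(i) < σ(i+1)`; the unused entries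
are normalized to `0`. -/
def NCond (l : ℕ) (σ : Equiv.Perm (Fin l)) (n : ℕ → ℤ) : Prop :=
  (∀ i, 1 ≤ i → i ≤ l - 2 → 0 ≤ n i) ∧
  (∀ a : Fin l, (a : ℕ) = l - 2 → (2 : ℤ) - (((σ a : ℕ) : ℤ) + 1) ≤ n (l - 1)) ∧
  (∀ i, 1 ≤ i → i ≤ l - 1 → ∀ a b : Fin l, (a : ℕ) = i - 1 → (b : ℕ) = i →
      (σ a : ℕ) < (σ b : ℕ) → 0 < n i) ∧
  (∀ i, i = 0 ∨ l - 1 < i → n i = 0)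

end

/-! Both the character and the bosonic sum satisfy the functional equations
`F_b(q,z) = ∑_{v ≤ b} z^v F_{k-v}(q,qz)` for `0 ≤ b ≤ k`. For the character this is the
decomposition of a configuration into its first entry `x₀ = v` and its tail. For the bosonic sum
it follows from termwise identities, in which `(q^n z)_∞ = (1 - q^n z)(q^{n+1} z)_∞` and
`(q)_{n+1} = (q)_n (1 - q^{n+1})` make neighbouring terms telescope. The equations express the
coefficient of `q^a z^c`, `c > 0`, through coefficients of smaller total degree, so the two
solutions agree once their `z`-free parts (both `1`) do. -/

open scoped MvPowerSeries.WithPiTopology Topology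

@[simp] lemma idx2_apply_zero (a c : ℕ) : idx2 a c 0 = a := by simp [idx2]

@[simp] lemma idx2_apply_one (a c : ℕ) : idx2 a c 1 = c := by simp [idx2]

lemma idx2_eq_iff {a c : ℕ} {e : Fin 2 →₀ ℕ} : idx2 a c = e ↔ a = e 0 ∧ c = e 1 := by
  refine ⟨fun h => by simp [← h], fun ⟨ha, hc⟩ => ?_⟩
  ext i
  fin_cases i <;> simp [ha, hc]

lemma eq_idx2_iff {a c : ℕ} {e : Fin 2 →₀ ℕ} : e = idx2 a c ↔ e 0 = a ∧ e 1 = c := by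
  rw [eq_comm, idx2_eq_iff, eq_comm, @eq_comm _ c]

lemma idx2_apply_self (e : Fin 2 →₀ ℕ) : idx2 (e 0) (e 1) = e := idx2_eq_iff.mpr ⟨rfl, rfl⟩

lemma tsub_idx2 (e : Fin 2 →₀ ℕ) (a c : ℕ) : e - idx2 a c = idx2 (e 0 - a) (e 1 - c) :=
  eq_idx2_iff.mpr ⟨by simp, by simp⟩

lemma Qv_pow_mul_Zv_pow (a c : ℕ) : Qv ^ a * Zv ^ c = monomial (idx2 a c) 1 := by
  rw [Qv, Zv, X_pow_eq, X_pow_eq, monomial_mul_monomial, one_mul, idx2]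

lemma coeff_Qv_pow_mul_Zv_pow_mul (a c : ℕ) (f : PS) (e : Fin 2 →₀ ℕ) :
    coeff e (Qv ^ a * Zv ^ c * f) =
      if a ≤ e 0 ∧ c ≤ e 1 then coeff (idx2 (e 0 - a) (e 1 - c)) f else 0 := by
  classical
  rw [Qv_pow_mul_Zv_pow, coeff_monomial_mul, one_mul, tsub_idx2]
  simp [Finsupp.le_def, Fin.forall_fin_two]

lemma Zv_dvd_iff {f : PS} : Zv ∣ f ↔ ∀ a, coeff (idx2 a 0) f = 0 := by
  rw [Zv, X_dvd_iff]
  refine ⟨fun h a => h _ (by simp), fun h e he => ?_⟩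
  rw [← idx2_apply_self e, he]
  exact h _

lemma coeff_ofCoeff (c : (Fin 2 →₀ ℕ) → ℂ) (e : Fin 2 →₀ ℕ) : coeff e (ofCoeff c) = c e := rfl

/-! ### The shift `Sop` -/

lemma coeff_Sop (f : PS) (e : Fin 2 →₀ ℕ) :
    coeff e (Sop f) = if e 1 ≤ e 0 then coeff (idx2 (e 0 - e 1) (e 1)) f else 0 := rfl

noncomputable def shiftSubst : Fin 2 → PS := ![Qv, Qv * Zv]

lemma hasSubst_shiftSubst : HasSubst shiftSubst :=
  hasSubst_of_constantCoeff_zero fun s => by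
    fin_cases s <;> simp [shiftSubst, Qv, Zv]

lemma prod_shiftSubst_pow (d : Fin 2 →₀ ℕ) :
    (d.prod fun s n => shiftSubst s ^ n) = monomial (idx2 (d 0 + d 1) (d 1)) 1 := by
  rw [Finsupp.prod_fintype _ _ (by simp), Fin.prod_univ_two, ← Qv_pow_mul_Zv_pow]
  simp only [shiftSubst, Matrix.cons_val_zero, Matrix.cons_val_one]
  ring

lemma Sop_eq_subst (f : PS) : Sop f = subst shiftSubst f := by
  ext e
  rw [coeff_subst hasSubst_shiftSubst]
  simp only [prod_shiftSubst_pow, coeff_monomial, eq_idx2_iff, smul_eq_mul, mul_ite, mul_one,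
    mul_zero, coeff_Sop]
  split_ifs with h
  · rw [finsum_eq_single _ (idx2 (e 0 - e 1) (e 1))]
    · simp only [idx2_apply_zero, idx2_apply_one, and_true, left_eq_ite_iff]
      omega
    · intro d hd
      rw [if_neg]
      rintro ⟨h0, h1⟩
      exact hd (eq_idx2_iff.mpr ⟨by omega, h1.symm⟩)
  · rw [finsum_eq_zero_of_forall_eq_zero]
    intro d
    rw [if_neg]
    omega

noncomputable def shiftAlgHom : PS →ₐ[ℂ] PS := substAlgHom hasSubst_shiftSubst

lemma coe_shiftAlgHom : ⇑shiftAlgHom = Sop := by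
  ext1 f
  rw [Sop_eq_subst, shiftAlgHom, coe_substAlgHom]

@[simp] lemma Sop_Qv : Sop Qv = Qv := by
  rw [Sop_eq_subst, Qv, subst_X hasSubst_shiftSubst]; rfl

@[simp] lemma Sop_Zv : Sop Zv = Qv * Zv := by
  rw [Sop_eq_subst, Zv, subst_X hasSubst_shiftSubst]; rfl

@[simp] lemma Sop_mul (f g : PS) : Sop (f * g) = Sop f * Sop g := by
  simp only [← coe_shiftAlgHom, map_mul]

@[simp] lemma Sop_add (f g : PS) : Sop (f + g) = Sop f + Sop g := by
  simp only [← coe_shiftAlgHom, map_add]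

@[simp] lemma Sop_sub (f g : PS) : Sop (f - g) = Sop f - Sop g := by
  simp only [← coe_shiftAlgHom, map_sub]

@[simp] lemma Sop_one : Sop 1 = 1 := by
  simp only [← coe_shiftAlgHom, map_one]

@[simp] lemma Sop_pow (f : PS) (n : ℕ) : Sop (f ^ n) = Sop f ^ n := by
  simp only [← coe_shiftAlgHom, map_pow]

@[simp] lemma Sop_smul (r : ℂ) (f : PS) : Sop (r • f) = r • Sop f := by
  simp only [← coe_shiftAlgHom, map_smul]

lemma Sop_prod {ι : Type*} (s : Finset ι) (f : ι → PS) :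
    Sop (∏ i ∈ s, f i) = ∏ i ∈ s, Sop (f i) := by
  simp only [← coe_shiftAlgHom, map_prod]

lemma constantCoeff_Sop (f : PS) : constantCoeff (Sop f) = constantCoeff f := by
  rw [← coeff_zero_eq_constantCoeff_apply, ← coeff_zero_eq_constantCoeff_apply, coeff_Sop]
  simp only [Finsupp.coe_zero, Pi.zero_apply, le_refl, if_true, tsub_zero]
  rw [show idx2 0 0 = 0 from idx2_eq_iff.mpr ⟨rfl, rfl⟩]

lemma Sop_inv (f : PS) (hf : constantCoeff f ≠ 0) : Sop f⁻¹ = (Sop f)⁻¹ := by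
  rw [MvPowerSeries.eq_inv_iff_mul_eq_one (by rwa [constantCoeff_Sop]), ← Sop_mul,
    MvPowerSeries.inv_mul_cancel _ hf, Sop_one]

lemma continuous_Sop : Continuous Sop := by
  refine continuous_pi fun e => ?_
  by_cases h : e 1 ≤ e 0
  · simp only [Sop, ofCoeff, h, if_true]
    exact continuous_apply _
  · simp only [Sop, ofCoeff, h, if_false]
    exact continuous_const

/-! ### The products `(q)_n` and `(q^m z)_∞` -/

@[simp] lemma Sop_pochQ (t : ℕ) : Sop (pochQ t) = pochQ t := by
  simp [pochQ, Sop_prod]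

noncomputable def pochQZ (m M : ℕ) : PS := ∏ i ∈ range M, (1 - Qv ^ (m + i) * Zv)

lemma pochQZ_succ' (m M : ℕ) : pochQZ m (M + 1) = (1 - Qv ^ m * Zv) * pochQZ (m + 1) M := by
  simp only [pochQZ, prod_range_succ', add_zero, add_assoc, add_comm 1]
  ring

lemma Sop_pochQZ (m M : ℕ) : Sop (pochQZ m M) = pochQZ (m + 1) M := by
  simp only [pochQZ, Sop_prod, Sop_sub, Sop_one, Sop_mul, Sop_pow, Sop_Qv, Sop_Zv]
  refine prod_congr rfl fun i _ => ?_
  ring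

lemma coeff_pochQZ_succ {m M : ℕ} {e : Fin 2 →₀ ℕ} (h : e 0 < m + M) :
    coeff e (pochQZ m (M + 1)) = coeff e (pochQZ m M) := by
  have : coeff e (pochQZ m M * (Qv ^ (m + M) * Zv)) = 0 := by
    rw [show pochQZ m M * (Qv ^ (m + M) * Zv) = Qv ^ (m + M) * Zv ^ 1 * pochQZ m M by ring,
      coeff_Qv_pow_mul_Zv_pow_mul, if_neg]
    omega
  rw [pochQZ, prod_range_succ, mul_one_sub, map_sub, ← pochQZ, this, sub_zero]

lemma coeff_pochInfQZ {m M : ℕ} {e : Fin 2 →₀ ℕ} (h : e 0 < M) :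
    coeff e (pochInfQZ m) = coeff e (pochQZ m M) := by
  induction M, h using Nat.le_induction with
  | base => rfl
  | succ M hM ih => rw [ih, coeff_pochQZ_succ (by omega)]

lemma tendsto_pochQZ (m : ℕ) : Tendsto (pochQZ m) atTop (𝓝 (pochInfQZ m)) := by
  refine (WithPiTopology.tendsto_iff_coeff_tendsto _ _ _).mpr fun e => ?_
  exact tendsto_atTop_of_eventually_const (i₀ := e 0 + 1) fun M hM =>
    (coeff_pochInfQZ (by omega)).symm

lemma pochInfQZ_eq_mul (m : ℕ) : pochInfQZ m = (1 - Qv ^ m * Zv) * pochInfQZ (m + 1) := by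
  refine tendsto_nhds_unique ((tendsto_pochQZ m).comp (tendsto_add_atTop_nat 1)) ?_
  simpa only [Function.comp_def, pochQZ_succ'] using (tendsto_pochQZ (m + 1)).const_mul _

lemma Sop_pochInfQZ (m : ℕ) : Sop (pochInfQZ m) = pochInfQZ (m + 1) := by
  refine tendsto_nhds_unique ?_ (tendsto_pochQZ (m + 1))
  simpa only [Function.comp_def, Sop_pochQZ] using
    (continuous_Sop.tendsto _).comp (tendsto_pochQZ m)

lemma constantCoeff_pochQ (t : ℕ) : constantCoeff (pochQ t) = 1 := by
  simp [pochQ, Qv]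

lemma constantCoeff_pochInfQZ (m : ℕ) : constantCoeff (pochInfQZ m) = 1 := by
  rw [← coeff_zero_eq_constantCoeff_apply, coeff_pochInfQZ (M := 1) (by simp)]
  simp [pochQZ, Qv, Zv]

lemma Zv_dvd_pochQZ_sub_one (m M : ℕ) : Zv ∣ pochQZ m M - 1 := by
  induction M with
  | zero => simp [pochQZ]
  | succ M ih =>
    rw [pochQZ, prod_range_succ, ← pochQZ,
      show pochQZ m M * (1 - Qv ^ (m + M) * Zv) - 1
        = (pochQZ m M - 1) - pochQZ m M * Qv ^ (m + M) * Zv by ring]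
    exact dvd_sub ih (dvd_mul_left _ _)

lemma Zv_dvd_pochInfQZ_sub_one (m : ℕ) : Zv ∣ pochInfQZ m - 1 := by
  refine Zv_dvd_iff.mpr fun a => ?_
  rw [map_sub, coeff_pochInfQZ (M := a + 1) (by simp), ← map_sub]
  exact Zv_dvd_iff.mp (Zv_dvd_pochQZ_sub_one m (a + 1)) a

lemma inv_eq_mul_inv_of_eq_mul {f g u : PS} (hf : constantCoeff f ≠ 0) (hg : constantCoeff g ≠ 0)
    (h : f = u * g) : g⁻¹ = u * f⁻¹ := by
  rw [MvPowerSeries.inv_eq_iff_mul_eq_one hg, mul_comm u, mul_assoc, ← h,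
    MvPowerSeries.inv_mul_cancel _ hf]

lemma constantCoeff_pochQ_mul_pochInfQZ (t m : ℕ) : constantCoeff (pochQ t * pochInfQZ m) ≠ 0 := by
  simp [constantCoeff_pochQ, constantCoeff_pochInfQZ]

lemma Sop_inv_pochQ_mul_pochInfQZ (n : ℕ) :
    Sop (pochQ n * pochInfQZ n)⁻¹ = (pochQ n * pochInfQZ (n + 1))⁻¹ := by
  rw [Sop_inv _ (constantCoeff_pochQ_mul_pochInfQZ n n), Sop_mul, Sop_pochQ, Sop_pochInfQZ]

lemma inv_pochQ_mul_pochInfQZ_succ (n : ℕ) :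
    (pochQ n * pochInfQZ (n + 1))⁻¹ = (1 - Qv ^ n * Zv) * (pochQ n * pochInfQZ n)⁻¹ :=
  inv_eq_mul_inv_of_eq_mul (constantCoeff_pochQ_mul_pochInfQZ _ _)
    (constantCoeff_pochQ_mul_pochInfQZ _ _) (by rw [pochInfQZ_eq_mul n]; ring)

lemma inv_pochQ_mul_pochInfQZ_succ' (n : ℕ) :
    (pochQ n * pochInfQZ (n + 1))⁻¹ = (1 - Qv ^ (n + 1)) * (pochQ (n + 1) * pochInfQZ (n + 1))⁻¹ :=
  inv_eq_mul_inv_of_eq_mul (constantCoeff_pochQ_mul_pochInfQZ _ _)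
    (constantCoeff_pochQ_mul_pochInfQZ _ _) (by rw [pochQ, prod_range_succ, ← pochQ]; ring)

lemma three_mul_mul_succ_div_two (n : ℕ) : 3 * n * (n + 1) / 2 = n * (3 * n - 1) / 2 + 2 * n := by
  rw [← Nat.add_mul_div_left _ _ two_pos]
  rcases n with _ | n
  · rfl
  · rw [show 3 * (n + 1) - 1 = 3 * n + 2 by omega]
    ring_nf

lemma succ_mul_three_mul_succ_sub_one_div_two (n : ℕ) :
    (n + 1) * (3 * (n + 1) - 1) / 2 = 3 * n * (n + 1) / 2 + (n + 1) := by
  rw [← Nat.add_mul_div_left _ _ two_pos, show 3 * (n + 1) - 1 = 3 * n + 2 by omega]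
  congr 1
  ring

/-- The functional equations `F_b(q,z) = ∑_{v ≤ b} z^v F_{k-v}(q,qz)`, `0 ≤ b ≤ k`, in recursive
form. -/
def ShiftRecursion (k : ℕ) (F : ℕ → PS) : Prop :=
  F 0 = Sop (F k) ∧ ∀ b < k, F (b + 1) = F b + Zv ^ (b + 1) * Sop (F (k - (b + 1)))

lemma ShiftRecursion.sub {k : ℕ} {F G : ℕ → PS} (hF : ShiftRecursion k F)
    (hG : ShiftRecursion k G) : ShiftRecursion k (fun b => F b - G b) := by
  refine ⟨by simp only [hF.1, hG.1, Sop_sub], fun b hb => ?_⟩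
  simp only [hF.2 b hb, hG.2 b hb, Sop_sub]
  ring

lemma Zv_dvd_Sop {f : PS} (h : Zv ∣ f) : Zv ∣ Sop f := by
  obtain ⟨g, rfl⟩ := h
  exact ⟨Qv * Sop g, by rw [Sop_mul, Sop_Zv]; ring⟩

lemma coeff_Zv_pow_mul_Sop (v a c : ℕ) (f : PS) :
    coeff (idx2 a c) (Zv ^ v * Sop f) =
      if v ≤ c ∧ c - v ≤ a then coeff (idx2 (a - (c - v)) (c - v)) f else 0 := by
  rw [← one_mul (Zv ^ v), ← pow_zero Qv, coeff_Qv_pow_mul_Zv_pow_mul, coeff_Sop]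
  simp only [idx2_apply_zero, idx2_apply_one, zero_le, true_and, Nat.sub_zero]
  by_cases hv : v ≤ c <;> simp [hv]

lemma ShiftRecursion.Zv_dvd {k : ℕ} {F : ℕ → PS} (hF : ShiftRecursion k F) (h : Zv ∣ F k) :
    ∀ b ≤ k, Zv ∣ F b
  | 0, _ => hF.1 ▸ Zv_dvd_Sop h
  | b + 1, hb => by
    rw [hF.2 b hb]
    exact dvd_add (hF.Zv_dvd h b (by omega)) (Dvd.dvd.mul_right (dvd_pow_self _ b.succ_ne_zero) _)

lemma ShiftRecursion.eq_zero {k : ℕ} {F : ℕ → PS} (hF : ShiftRecursion k F) (h : Zv ∣ F k) :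
    ∀ b ≤ k, F b = 0 := by
  suffices ∀ N a c, a + c ≤ N → ∀ b ≤ k, coeff (idx2 a c) (F b) = 0 from fun b hb =>
    ext fun e => by rw [← idx2_apply_self e, this _ _ _ le_rfl b hb, map_zero]
  intro N
  induction N with
  | zero =>
    intro a c hac b hb
    obtain rfl : c = 0 := by omega
    exact Zv_dvd_iff.mp (hF.Zv_dvd h b hb) a
  | succ N ih =>
    intro a c hac b hb
    rcases Nat.eq_zero_or_pos c with rfl | hc
    · exact Zv_dvd_iff.mp (hF.Zv_dvd h b hb) a
    induction b with
    | zero =>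
      rw [hF.1, ← one_mul (Sop _), ← pow_zero Zv, coeff_Zv_pow_mul_Sop]
      split_ifs
      exacts [ih _ _ (by omega) k le_rfl, rfl]
    | succ b ihb =>
      rw [hF.2 b hb, map_add, ihb (by omega), zero_add, coeff_Zv_pow_mul_Sop]
      split_ifs
      exacts [ih _ _ (by omega) _ (Nat.sub_le _ _), rfl]

lemma ShiftRecursion.unique {k : ℕ} {F G : ℕ → PS} (hF : ShiftRecursion k F)
    (hG : ShiftRecursion k G) (h : Zv ∣ F k - G k) {b : ℕ} (hb : b ≤ k) : F b = G b :=
  sub_eq_zero.mp ((hF.sub hG).eq_zero h b hb)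

/-! ### The bosonic sum -/

noncomputable def bosonicTerm₁ (k b n : ℕ) : PS :=
  (-1 : ℂ) ^ (n + 1) •
    (Qv ^ (n ^ 2 * k + n * b + 3 * n * (n + 1) / 2) * Zv ^ (n * k + b + n + 1) *
      (pochQ n * pochInfQZ n)⁻¹)

noncomputable def bosonicTerm₂ (k b n : ℕ) : PS :=
  (-1 : ℂ) ^ n •
    (Qv ^ (n ^ 2 * k - n * b + n * (3 * n - 1) / 2) * Zv ^ (n * k + n) *
      (pochQ n * pochInfQZ n)⁻¹)

/-- `bosonicTerm₂ k b n` at the formal value `b = -1`. -/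
noncomputable def telescopeTerm (k n : ℕ) : PS :=
  (-1 : ℂ) ^ n •
    (Qv ^ (n ^ 2 * k + n * (3 * n - 1) / 2 + n) * Zv ^ (n * k + n) * (pochQ n * pochInfQZ n)⁻¹)

lemma bosonicTerm₂_zero (k b : ℕ) : bosonicTerm₂ k b 0 = (pochQ 0 * pochInfQZ 0)⁻¹ := by
  simp [bosonicTerm₂]

lemma telescopeTerm_zero (k : ℕ) : telescopeTerm k 0 = (pochQ 0 * pochInfQZ 0)⁻¹ := by
  simp [telescopeTerm]

lemma Sop_smul_monomial_mul (r : ℂ) (a c : ℕ) (f : PS) :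
    Sop (r • (Qv ^ a * Zv ^ c * f)) = r • (Qv ^ (a + c) * Zv ^ c * Sop f) := by
  simp only [Sop_smul, Sop_mul, Sop_pow, Sop_Qv, Sop_Zv]
  congr 1
  ring

lemma mul_le_sq_mul (n k : ℕ) : n * k ≤ n ^ 2 * k :=
  Nat.mul_le_mul_right k (Nat.le_self_pow two_ne_zero n)

lemma bosonicTerm₁_zero (k n : ℕ) :
    bosonicTerm₁ k 0 n = Sop (bosonicTerm₂ k k n) - telescopeTerm k n := by
  have hq : n ^ 2 * k - n * k + n * (3 * n - 1) / 2 + (n * k + n)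
      = n ^ 2 * k + n * (3 * n - 1) / 2 + n := by
    zify [mul_le_sq_mul n k]
    ring
  rw [eq_sub_iff_add_eq', bosonicTerm₂, Sop_smul_monomial_mul, Sop_inv_pochQ_mul_pochInfQZ, hq,
    inv_pochQ_mul_pochInfQZ_succ, telescopeTerm, bosonicTerm₁, three_mul_mul_succ_div_two,
    smul_eq_C_mul, smul_eq_C_mul, smul_eq_C_mul]
  simp only [map_pow, map_neg, map_one]
  ring

lemma bosonicTerm₂_zero_succ (k n : ℕ) :
    bosonicTerm₂ k 0 (n + 1) = telescopeTerm k (n + 1) + Sop (bosonicTerm₁ k k n) := by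
  rw [bosonicTerm₁, Sop_smul_monomial_mul, Sop_inv_pochQ_mul_pochInfQZ,
    inv_pochQ_mul_pochInfQZ_succ', telescopeTerm, bosonicTerm₂, mul_zero, Nat.sub_zero,
    succ_mul_three_mul_succ_sub_one_div_two, smul_eq_C_mul, smul_eq_C_mul, smul_eq_C_mul]
  simp only [map_pow, map_neg, map_one]
  ring

lemma Zv_pow_mul_Sop_bosonicTerm₂ {k b : ℕ} (n : ℕ) (hb : b < k) :
    Zv ^ (b + 1) * Sop (bosonicTerm₂ k (k - (b + 1)) n)
      = bosonicTerm₁ k (b + 1) n - bosonicTerm₁ k b n := by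
  have hq : n ^ 2 * k - n * (k - (b + 1)) + n * (3 * n - 1) / 2 + (n * k + n)
      = n ^ 2 * k + n * b + n * (3 * n - 1) / 2 + 2 * n := by
    have := (Nat.mul_le_mul_left n (Nat.sub_le k (b + 1))).trans (mul_le_sq_mul n k)
    zify [show b + 1 ≤ k from hb, this]
    ring
  rw [bosonicTerm₂, Sop_smul_monomial_mul, Sop_inv_pochQ_mul_pochInfQZ, hq,
    inv_pochQ_mul_pochInfQZ_succ, bosonicTerm₁, bosonicTerm₁, three_mul_mul_succ_div_two,
    smul_eq_C_mul, smul_eq_C_mul, smul_eq_C_mul]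
  simp only [map_pow, map_neg, map_one]
  ring

lemma bosonicTerm₂_succ_sub {k b : ℕ} (n : ℕ) (hb : b < k) :
    bosonicTerm₂ k (b + 1) (n + 1) - bosonicTerm₂ k b (n + 1)
      = Zv ^ (b + 1) * Sop (bosonicTerm₁ k (k - (b + 1)) n) := by
  have hle : (n + 1) * (b + 1) ≤ (n + 1) ^ 2 * k :=
    (Nat.mul_le_mul_left _ hb).trans (mul_le_sq_mul _ _)
  have hq : (n + 1) ^ 2 * k - (n + 1) * b + (n + 1) * (3 * (n + 1) - 1) / 2
      = (n + 1) ^ 2 * k - (n + 1) * (b + 1) + (n + 1) * (3 * (n + 1) - 1) / 2 + (n + 1) := by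
    zify [(Nat.mul_le_mul_left _ b.le_succ).trans hle, hle]
    ring
  have hq' : n ^ 2 * k + n * (k - (b + 1)) + 3 * n * (n + 1) / 2 + (n * k + (k - (b + 1)) + n + 1)
      = (n + 1) ^ 2 * k - (n + 1) * (b + 1) + (n + 1) * (3 * (n + 1) - 1) / 2 := by
    rw [succ_mul_three_mul_succ_sub_one_div_two]
    zify [show b + 1 ≤ k from hb, hle]
    ring
  have hz : (n + 1) * k + (n + 1) = b + 1 + (n * k + (k - (b + 1)) + n + 1) := by
    zify [show b + 1 ≤ k from hb]
    ring
  rw [bosonicTerm₁, Sop_smul_monomial_mul, Sop_inv_pochQ_mul_pochInfQZ, hq',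
    inv_pochQ_mul_pochInfQZ_succ', bosonicTerm₂, bosonicTerm₂, hq, hz,
    smul_eq_C_mul, smul_eq_C_mul, smul_eq_C_mul]
  simp only [map_pow, map_neg, map_one]
  ring

lemma summable_of_X_pow_dvd {σ R : Type*} [CommSemiring R] [TopologicalSpace R]
    {f : ℕ → MvPowerSeries σ R} (s : σ) (h : ∀ n, X s ^ n ∣ f n) : Summable f := by
  refine WithPiTopology.summable_iff_summable_coeff.mpr fun d => ?_
  refine summable_of_ne_finset_zero (s := range (d s + 1)) fun n hn => ?_
  exact X_pow_dvd_iff.mp (h n) d (by simpa using hn)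

lemma X_pow_dvd_smul_monomial_mul {n a : ℕ} (r : ℂ) (c : ℕ) (f : PS) (h : n ≤ a) :
    X 0 ^ n ∣ r • (Qv ^ a * Zv ^ c * f) := by
  rw [smul_eq_C_mul, mul_assoc, Qv]
  exact Dvd.dvd.mul_left (Dvd.dvd.mul_right (pow_dvd_pow _ h) _) _

lemma le_mul_three_mul_sub_one_div_two (n : ℕ) : n ≤ n * (3 * n - 1) / 2 := by
  rw [Nat.le_div_iff_mul_le two_pos]
  rcases n with _ | n
  · rfl
  · exact Nat.mul_le_mul_left _ (by omega)

lemma summable_bosonicTerm₁ (k b : ℕ) : Summable (bosonicTerm₁ k b) :=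
  summable_of_X_pow_dvd 0 fun n => X_pow_dvd_smul_monomial_mul _ _ _ (by
    rw [three_mul_mul_succ_div_two]; omega)

lemma summable_bosonicTerm₂ (k b : ℕ) : Summable (bosonicTerm₂ k b) :=
  summable_of_X_pow_dvd 0 fun n => X_pow_dvd_smul_monomial_mul _ _ _ (by
    have := le_mul_three_mul_sub_one_div_two n; omega)

lemma summable_telescopeTerm (k : ℕ) : Summable (telescopeTerm k) :=
  summable_of_X_pow_dvd 0 fun n => X_pow_dvd_smul_monomial_mul _ _ _ (by omega)

lemma HasSum.Sop {f : ℕ → PS} {a : PS} (h : HasSum f a) : HasSum (fun n => Sop (f n)) (Sop a) := by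
  simpa only [coe_shiftAlgHom, Function.comp_def] using
    h.map shiftAlgHom (coe_shiftAlgHom ▸ continuous_Sop)

noncomputable def bosonicSum (k b : ℕ) : PS := ∑' n, (bosonicTerm₁ k b n + bosonicTerm₂ k b n)

lemma hasSum_bosonicSum (k b : ℕ) :
    HasSum (fun n => bosonicTerm₁ k b n + bosonicTerm₂ k b n) (bosonicSum k b) :=
  ((summable_bosonicTerm₁ k b).add (summable_bosonicTerm₂ k b)).hasSum

lemma bosonicSum_eq_tsum_add_tsum (k b : ℕ) :
    bosonicSum k b = ∑' n, bosonicTerm₁ k b n + ∑' n, bosonicTerm₂ k b n :=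
  (summable_bosonicTerm₁ k b).tsum_add (summable_bosonicTerm₂ k b)

lemma bosonicSum_zero (k : ℕ) : bosonicSum k 0 = Sop (bosonicSum k k) := by
  have h₁ := (summable_bosonicTerm₁ k k).hasSum.Sop
  have h₂ := (summable_bosonicTerm₂ k k).hasSum.Sop
  have hu := (summable_telescopeTerm k).hasSum
  set U := ∑' n, telescopeTerm k n
  have hA : HasSum (bosonicTerm₁ k 0) (Sop (∑' n, bosonicTerm₂ k k n) - U) :=
    (h₂.sub hu).congr_fun (bosonicTerm₁_zero k)
  have hB : HasSum (bosonicTerm₂ k 0) (U + Sop (∑' n, bosonicTerm₁ k k n)) := by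
    refine (hasSum_nat_add_iff' 1).mp ?_
    rw [sum_range_one, bosonicTerm₂_zero, ← telescopeTerm_zero k, add_sub_right_comm]
    have hu' := (hasSum_nat_add_iff' 1).mpr hu
    rw [sum_range_one] at hu'
    exact (hu'.add h₁).congr_fun (bosonicTerm₂_zero_succ k)
  rw [bosonicSum, (hA.add hB).tsum_eq, bosonicSum_eq_tsum_add_tsum, Sop_add]
  abel

lemma bosonicSum_succ {k b : ℕ} (hb : b < k) :
    bosonicSum k (b + 1) = bosonicSum k b + Zv ^ (b + 1) * Sop (bosonicSum k (k - (b + 1))) := by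
  have h₁ := (summable_bosonicTerm₁ k (k - (b + 1))).hasSum.Sop.mul_left (Zv ^ (b + 1))
  have h₂ := (summable_bosonicTerm₂ k (k - (b + 1))).hasSum.Sop.mul_left (Zv ^ (b + 1))
  have hA : HasSum (fun n => bosonicTerm₁ k (b + 1) n - bosonicTerm₁ k b n)
      (Zv ^ (b + 1) * Sop (∑' n, bosonicTerm₂ k (k - (b + 1)) n)) :=
    h₂.congr_fun fun n => (Zv_pow_mul_Sop_bosonicTerm₂ n hb).symm
  have hB : HasSum (fun n => bosonicTerm₂ k (b + 1) n - bosonicTerm₂ k b n)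
      (Zv ^ (b + 1) * Sop (∑' n, bosonicTerm₁ k (k - (b + 1)) n)) := by
    refine (hasSum_nat_add_iff' 1).mp ?_
    rw [sum_range_one, bosonicTerm₂_zero, bosonicTerm₂_zero, sub_self, sub_zero]
    exact h₁.congr_fun fun n => bosonicTerm₂_succ_sub n hb
  have := ((hasSum_bosonicSum k b).add (hA.add hB)).congr_fun fun n =>
    show bosonicTerm₁ k (b + 1) n + bosonicTerm₂ k (b + 1) n = _ by abel
  rw [bosonicSum, this.tsum_eq, bosonicSum_eq_tsum_add_tsum k (k - (b + 1)), Sop_add, mul_add]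
  abel

lemma bosonicSum_shiftRecursion (k : ℕ) : ShiftRecursion k (bosonicSum k) :=
  ⟨bosonicSum_zero k, fun _ hb => bosonicSum_succ hb⟩

lemma Zv_dvd_of_hasSum {f : ℕ → PS} {a : PS} (h : HasSum f a) (hf : ∀ n, Zv ∣ f n) : Zv ∣ a :=
  Zv_dvd_iff.mpr fun i => (WithPiTopology.hasSum_iff_hasSum_coeff.mp h _).unique
    (by simpa only [Zv_dvd_iff.mp (hf _) i] using hasSum_zero)

lemma Zv_dvd_smul_monomial_mul (r : ℂ) (a : ℕ) {c : ℕ} (f : PS) (hc : 1 ≤ c) :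
    Zv ∣ r • (Qv ^ a * Zv ^ c * f) := by
  rw [smul_eq_C_mul]
  exact Dvd.dvd.mul_left (Dvd.dvd.mul_right (Dvd.dvd.mul_left (dvd_pow_self _ (by omega)) _) _) _

lemma Zv_dvd_inv_sub_one {f : PS} (hf : constantCoeff f ≠ 0) (h : Zv ∣ f - 1) : Zv ∣ f⁻¹ - 1 := by
  have : f⁻¹ - 1 = -(f - 1) * f⁻¹ := by
    rw [neg_sub, sub_mul, one_mul, MvPowerSeries.mul_inv_cancel _ hf]
  rw [this]
  exact (dvd_neg.mpr h).mul_right _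

lemma Zv_dvd_bosonicSum_sub_one (k b : ℕ) : Zv ∣ bosonicSum k b - 1 := by
  refine Zv_dvd_of_hasSum ((hasSum_bosonicSum k b).sub (hasSum_ite_eq 0 1)) fun n => ?_
  have h₁ : Zv ∣ bosonicTerm₁ k b n := Zv_dvd_smul_monomial_mul _ _ _ (by omega)
  rcases n with _ | n
  · rw [if_pos rfl, add_sub_assoc, bosonicTerm₂_zero]
    refine dvd_add h₁ (Zv_dvd_inv_sub_one (constantCoeff_pochQ_mul_pochInfQZ 0 0) ?_)
    simpa [pochQ] using Zv_dvd_pochInfQZ_sub_one 0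
  · rw [if_neg n.succ_ne_zero, sub_zero]
    exact dvd_add h₁ (Zv_dvd_smul_monomial_mul _ _ _ (by omega))

/-! ### Configurations -/

def IsConfig (k a c : ℕ) (x : ℕ → ℕ) : Prop :=
  (∀ j, x j + x (j + 1) ≤ k) ∧
    ∃ N, (∀ i, N ≤ i → x i = 0) ∧ ∑ j ∈ range N, j * x j = a ∧ ∑ j ∈ range N, x j = c

lemma eq_zero_of_sum_mul_eq {x : ℕ → ℕ} {N a : ℕ} (hN : ∀ i, N ≤ i → x i = 0)
    (ha : ∑ j ∈ range N, j * x j = a) {i : ℕ} (hi : a < i) : x i = 0 := by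
  by_contra hx
  have hiN : i < N := by by_contra h; exact hx (hN i (by omega))
  have : i * x i ≤ a := ha ▸ single_le_sum (fun j _ => Nat.zero_le (j * x j)) (mem_range.mpr hiN)
  have : i ≤ i * x i := Nat.le_mul_of_pos_right i (Nat.pos_of_ne_zero hx)
  omega

lemma isConfig_iff_of_vanish {k a c N : ℕ} {x : ℕ → ℕ} (hN : ∀ i, N ≤ i → x i = 0) :
    IsConfig k a c x ↔
      (∀ j, x j + x (j + 1) ≤ k) ∧ ∑ j ∈ range N, j * x j = a ∧ ∑ j ∈ range N, x j = c := by
  refine and_congr_right fun _ => ⟨fun ⟨M, hM, hMa, hMc⟩ => ?_, fun h => ⟨N, hN, h⟩⟩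
  have key : ∀ g : ℕ → ℕ, (∀ i, x i = 0 → g i = 0) →
      ∑ j ∈ range N, g j = ∑ j ∈ range M, g j := fun g hg => by
    rw [← eventually_constant_sum (fun i hi => hg i (hN i hi)) (le_max_left N M),
      ← eventually_constant_sum (fun i hi => hg i (hM i hi)) (le_max_right N M)]
  rw [key _ fun i hi => by rw [hi, mul_zero], key _ fun i hi => hi]
  exact ⟨hMa, hMc⟩

lemma IsConfig.eq_zero {k a c : ℕ} {x : ℕ → ℕ} (hx : IsConfig k a c x) {i : ℕ} (hi : a < i) :
    x i = 0 :=
  have ⟨_, _, hN, ha, _⟩ := hx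
  eq_zero_of_sum_mul_eq hN ha hi

lemma finite_isConfig (k a c : ℕ) (p : (ℕ → ℕ) → Prop) : Finite {x // IsConfig k a c x ∧ p x} := by
  refine Finite.of_injective (β := Fin (a + 1) → Fin (k + 1))
    (fun x i => ⟨x.1 i, Nat.lt_succ_of_le ((Nat.le_add_right _ _).trans (x.2.1.1 i))⟩) ?_
  intro x y hxy
  ext i
  by_cases hi : i ≤ a
  · simpa using congrFun hxy ⟨i, Nat.lt_succ_of_le hi⟩
  · rw [x.2.1.eq_zero (by omega), y.2.1.eq_zero (by omega)]

lemma windowOK_two {k : ℕ} {x : ℕ → ℕ} : windowOK k 2 x ↔ ∀ j, x j + x (j + 1) ≤ k := by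
  simp [windowOK, sum_range_succ]

lemma boundOK_two {b x : ℕ → ℕ} : boundOK 2 b x ↔ x 0 ≤ b 0 := by
  simp [boundOK]

lemma coeff_chiInf (k b a c : ℕ) :
    coeff (idx2 a c) (chiInf k 2 fun _ => b) = Nat.card {x // IsConfig k a c x ∧ x 0 ≤ b} := by
  rw [chiInf, coeff_ofCoeff]
  simp only [idx2_apply_zero, idx2_apply_one]
  refine congrArg _ (Nat.card_congr (Equiv.subtypeEquivRight fun x => ?_))
  rw [windowOK_two, boundOK_two]
  constructor
  · rintro ⟨hw, hb, hN, ha, hc⟩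
    exact ⟨(isConfig_iff_of_vanish hN).mpr ⟨hw, ha, hc⟩, hb⟩
  · rintro ⟨hx, hb⟩
    have hN : ∀ i, a + 1 ≤ i → x i = 0 := fun i hi => hx.eq_zero (by omega)
    obtain ⟨hw, ha, hc⟩ := (isConfig_iff_of_vanish hN).mp hx
    exact ⟨hw, hb, hN, ha, hc⟩

lemma sum_range_succ_mul_eq (x : ℕ → ℕ) (N : ℕ) :
    ∑ j ∈ range (N + 1), j * x j = ∑ j ∈ range N, j * x (j + 1) + ∑ j ∈ range N, x (j + 1) := by
  simp only [sum_range_succ', ← sum_add_distrib, add_mul, one_mul, zero_mul, add_zero]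

lemma isConfig_iff_tail {k a c : ℕ} {x : ℕ → ℕ} :
    IsConfig k a c x ↔ x 0 + x 1 ≤ k ∧ x 0 ≤ c ∧ c - x 0 ≤ a ∧
      IsConfig k (a - (c - x 0)) (c - x 0) (fun j => x (j + 1)) := by
  constructor
  · intro hx
    have ⟨hw, N, hN, _⟩ := hx
    obtain ⟨-, ha, hc⟩ := (isConfig_iff_of_vanish (N := N + 1) fun i hi => hN i (by omega)).mp hx
    rw [sum_range_succ_mul_eq] at ha
    rw [sum_range_succ'] at hc
    refine ⟨hw 0, by omega, by omega, ?_⟩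
    exact (isConfig_iff_of_vanish (N := N) fun i hi => hN (i + 1) (by omega)).mpr
      ⟨fun j => hw (j + 1), by omega, by omega⟩
  · rintro ⟨h01, hc, hca, hw, N, hN, ha, hc'⟩
    beta_reduce at hw hN ha hc'
    refine (isConfig_iff_of_vanish (N := N + 1) fun i hi => ?_).mpr ⟨fun j => ?_, ?_, ?_⟩
    · obtain ⟨i, rfl⟩ := Nat.exists_eq_add_of_le' (by omega : 1 ≤ i)
      exact hN i (by omega)
    · cases j
      exacts [h01, hw _]
    · rw [sum_range_succ_mul_eq]; omega
    · rw [sum_range_succ']; omega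

def seqCons (v : ℕ) (y : ℕ → ℕ) : ℕ → ℕ
  | 0 => v
  | i + 1 => y i

def configTailEquiv {k a c v : ℕ} (hvk : v ≤ k) (hvc : v ≤ c) (hca : c - v ≤ a) :
    {x // IsConfig k a c x ∧ x 0 = v} ≃
      {y // IsConfig k (a - (c - v)) (c - v) y ∧ y 0 ≤ k - v} where
  toFun x := ⟨fun j => x.1 (j + 1), by
    obtain ⟨h01, -, -, hy⟩ := isConfig_iff_tail.mp x.2.1
    rw [x.2.2] at h01 hy
    exact ⟨hy, show x.1 1 ≤ k - v by omega⟩⟩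
  invFun y := ⟨seqCons v y.1, isConfig_iff_tail.mpr ⟨by simp only [seqCons]; have := y.2.2; omega,
    hvc, hca, y.2.1⟩, rfl⟩
  left_inv x := Subtype.ext <| funext fun i => by
    cases i
    exacts [x.2.2.symm, rfl]
  right_inv _ := rfl

lemma card_isConfig_head (k a c v : ℕ) (hvk : v ≤ k) :
    Nat.card {x // IsConfig k a c x ∧ x 0 = v} =
      if v ≤ c ∧ c - v ≤ a then Nat.card {y // IsConfig k (a - (c - v)) (c - v) y ∧ y 0 ≤ k - v}
      else 0 := by
  split_ifs with h
  · exact Nat.card_congr (configTailEquiv hvk h.1 h.2)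
  · have : IsEmpty {x // IsConfig k a c x ∧ x 0 = v} := ⟨fun ⟨x, hx, hx0⟩ => h <| by
      have := isConfig_iff_tail.mp hx
      omega⟩
    exact Nat.card_of_isEmpty

lemma card_isConfig_le_succ (k a c b : ℕ) :
    Nat.card {x // IsConfig k a c x ∧ x 0 ≤ b + 1} =
      Nat.card {x // IsConfig k a c x ∧ x 0 ≤ b} +
        Nat.card {x // IsConfig k a c x ∧ x 0 = b + 1} := by
  classical
  have := finite_isConfig k a c (· 0 ≤ b)
  have := finite_isConfig k a c (· 0 = b + 1)
  rw [← Nat.card_sum]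
  refine Nat.card_congr ((Equiv.subtypeEquivRight fun x => ?_).trans (subtypeOrEquiv _ _ ?_))
  · rw [Nat.le_succ_iff, and_or_left]
  · intro r hrp hrq x hx
    obtain ⟨_, h₁⟩ := hrp x hx
    obtain ⟨_, h₂⟩ := hrq x hx
    omega

lemma chiInf_shiftRecursion (k : ℕ) : ShiftRecursion k fun b => chiInf k 2 fun _ => b := by
  refine ⟨ext fun e => ?_, fun b hb => ext fun e => ?_⟩ <;> rw [← idx2_apply_self e]
  · rw [← one_mul (Sop _), ← pow_zero Zv, coeff_Zv_pow_mul_Sop, coeff_chiInf, coeff_chiInf]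
    simp only [nonpos_iff_eq_zero, card_isConfig_head _ _ _ 0 (Nat.zero_le k), Nat.sub_zero]
    split_ifs <;> simp
  · rw [map_add, coeff_Zv_pow_mul_Sop, coeff_chiInf, coeff_chiInf, card_isConfig_le_succ,
      card_isConfig_head _ _ _ (b + 1) hb, Nat.cast_add]
    split_ifs
    · rw [coeff_chiInf]
    · simp

lemma isConfig_size_zero {k a : ℕ} {x : ℕ → ℕ} : IsConfig k a 0 x ↔ a = 0 ∧ x = 0 := by
  constructor
  · rintro ⟨-, N, hN, ha, hc⟩
    have hx : x = 0 := funext fun i => by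
      by_cases hi : i < N
      · exact (sum_eq_zero_iff.mp hc) i (mem_range.mpr hi)
      · exact hN i (by omega)
    subst hx
    exact ⟨by simpa using ha.symm, rfl⟩
  · rintro ⟨rfl, rfl⟩
    exact ⟨fun _ => Nat.zero_le k, 0, fun _ _ => rfl, rfl, rfl⟩

lemma Zv_dvd_chiInf_sub_one (k b : ℕ) : Zv ∣ chiInf k 2 (fun _ => b) - 1 := by
  refine Zv_dvd_iff.mpr fun a => ?_
  rw [map_sub, coeff_chiInf, coeff_one, sub_eq_zero]
  simp only [isConfig_size_zero, idx2, Finsupp.single_zero, add_zero, Finsupp.single_eq_zero]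
  split_ifs with ha
  · subst ha
    simp only [true_and, Nat.cast_eq_one, Nat.card_eq_one_iff_unique]
    exact ⟨⟨fun x y => Subtype.ext (x.2.1.trans y.2.1.symm)⟩, ⟨⟨0, rfl, Nat.zero_le _⟩⟩⟩
  · simp [ha]

lemma bosonicSum_eq_chiInf {k b : ℕ} (hb : b ≤ k) : bosonicSum k b = chiInf k 2 fun _ => b := by
  refine (bosonicSum_shiftRecursion k).unique (chiInf_shiftRecursion k) ?_ hb
  simpa using dvd_sub (Zv_dvd_bosonicSum_sub_one k k) (Zv_dvd_chiInf_sub_one k k)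

theorem stmt8_general (k b0 : ℕ) (hb : b0 ≤ k) (e : Fin 2 →₀ ℕ) :
    HasSum
      (fun n : ℕ =>
        MvPowerSeries.coeff e ((-1 : ℂ) ^ (n + 1) •
          (Qv ^ (n ^ 2 * k + n * b0 + 3 * n * (n + 1) / 2) * Zv ^ (n * k + b0 + n + 1) *
            (pochQ n * pochInfQZ n)⁻¹)) +
        MvPowerSeries.coeff e ((-1 : ℂ) ^ n •
          (Qv ^ (n ^ 2 * k - n * b0 + n * (3 * n - 1) / 2) * Zv ^ (n * k + n) *
            (pochQ n * pochInfQZ n)⁻¹)))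
      (MvPowerSeries.coeff e (chiInf k 2 fun _ => b0)) := by
  have h := WithPiTopology.hasSum_iff_hasSum_coeff.mp (hasSum_bosonicSum k b0) e
  simp only [map_add, bosonicSum_eq_chiInf hb] at h
  exact h

/-- The bosonic formula for `l = 2`:
`χ^{(∞)}_{k,2;b_0}(q,z) = Σ_{n≥0} (-1)^{n+1} q^{n²k+nb_0+3n(n+1)/2} z^{nk+b_0+n+1}/((q)_n (q^n z)_∞)
 + Σ_{n≥0} (-1)^n q^{n²k-nb_0+n(3n-1)/2} z^{nk+n}/((q)_n (q^n z)_∞)`,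
as an identity of formal power series (coefficientwise). -/
theorem stmt8 (k b0 : ℕ) (hk : 0 < k) (hb : b0 ≤ k) (e : Fin 2 →₀ ℕ) :
    HasSum
      (fun n : ℕ =>
        MvPowerSeries.coeff e ((-1 : ℂ) ^ (n + 1) •
          (Qv ^ (n ^ 2 * k + n * b0 + 3 * n * (n + 1) / 2) * Zv ^ (n * k + b0 + n + 1) *
            (pochQ n * pochInfQZ n)⁻¹)) +
        MvPowerSeries.coeff e ((-1 : ℂ) ^ n •
          (Qv ^ (n ^ 2 * k - n * b0 + n * (3 * n - 1) / 2) * Zv ^ (n * k + n) *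
            (pochQ n * pochInfQZ n)⁻¹)))
      (MvPowerSeries.coeff e (chiInf k 2 fun _ => b0)) :=
  stmt8_general k b0 hb e
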